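/- Let Y_0,…,Y_3 and Z_0,…,Z_3 be real constants and let B, D : ℝ⁴ → ℂ be twice continuously differentiable functions satisfying, for all ν, λ = 0,…,3 on ℝ⁴: (1/4) ∂_ν ∂_λ B = (Z_λ Z_ν − Y_λ Y_ν) B + (Y_ν Z_λ − Y_λ Z_ν) D and (1/4) ∂_ν ∂_λ D = (Z_λ Z_ν − Y_λ Y_ν) D + (Y_ν Z_λ − Y_λ Z_ν) B. Then either Y_ν Z_λ = Y_λ Z_ν for all ν, λ, or B and D are both identically zero on ℝ⁴. -/

import Mathlib

/-!
Mixed partials of a C² function commute, so comparing the equation for `(ν, λ)` with the one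
for `(λ, ν)` kills the symmetric coefficient `Z_λ Z_ν − Y_λ Y_ν` and leaves
`2 (Y_ν Z_λ − Y_λ Z_ν) D = 0` (resp. `… B = 0`). A single non-vanishing antisymmetric
coefficient therefore forces `D` and `B` to vanish.
-/

noncomputable section

/-- Partial derivative `∂_ν` on ℝ⁴ for ℂ-valued functions. -/
def pd4 (ν : Fin 4) (f : (Fin 4 → ℝ) → ℂ) (x : Fin 4 → ℝ) : ℂ :=
  fderiv ℝ f x (Pi.single ν 1)

section SecondDerivative

variable {𝕜 E F : Type*} [RCLike 𝕜] [NormedAddCommGroup E] [NormedSpace 𝕜 E]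
  [NormedAddCommGroup F] [NormedSpace 𝕜 F] {f : E → F} {x : E}

lemma fderiv_fderiv_apply (hf : DifferentiableAt 𝕜 (fderiv 𝕜 f) x) (v w : E) :
    fderiv 𝕜 (fun y => fderiv 𝕜 f y v) x w = fderiv 𝕜 (fderiv 𝕜 f) x w v := by
  simp [fderiv_clm_apply hf (differentiableAt_const v)]

lemma ContDiff.fderiv_fderiv_apply_comm (hf : ContDiff 𝕜 2 f) (x v w : E) :
    fderiv 𝕜 (fun y => fderiv 𝕜 f y v) x w = fderiv 𝕜 (fun y => fderiv 𝕜 f y w) x v := by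
  have hdf : DifferentiableAt 𝕜 (fderiv 𝕜 f) x :=
    (hf.fderiv_right (m := 1) le_rfl).differentiable one_ne_zero x
  rw [fderiv_fderiv_apply hdf, fderiv_fderiv_apply hdf]
  exact hf.contDiffAt.isSymmSndFDerivAt (by simp) w v

end SecondDerivative

lemma pd4_comm {f : (Fin 4 → ℝ) → ℂ} (hf : ContDiff ℝ 2 f) (ν lam : Fin 4) (x : Fin 4 → ℝ) :
    pd4 ν (pd4 lam f) x = pd4 lam (pd4 ν f) x :=
  hf.fderiv_fderiv_apply_comm x _ _

lemma eq_zero_of_pd4_pd4_eq (Y Z : Fin 4 → ℝ) {f g : (Fin 4 → ℝ) → ℂ} (hf : ContDiff ℝ 2 f)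
    (eqf : ∀ ν lam : Fin 4, ∀ x,
      (1 / 4 : ℂ) * pd4 ν (pd4 lam f) x
        = ((Z lam * Z ν - Y lam * Y ν : ℝ) : ℂ) * f x
          + ((Y ν * Z lam - Y lam * Z ν : ℝ) : ℂ) * g x)
    {ν lam : Fin 4} (hne : Y ν * Z lam ≠ Y lam * Z ν) (x : Fin 4 → ℝ) : g x = 0 := by
  have hswap := eqf lam ν x
  rw [← pd4_comm hf, eqf ν lam x] at hswap
  have hcoeff : (2 * (Y ν * Z lam - Y lam * Z ν) : ℂ) ≠ 0 := by
    exact_mod_cast mul_ne_zero two_ne_zero (sub_ne_zero.2 hne)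
  refine (mul_eq_zero.1 ?_).resolve_left hcoeff
  push_cast at hswap
  linear_combination hswap

theorem degenerate_or_zero
    (Y Z : Fin 4 → ℝ) (B D : (Fin 4 → ℝ) → ℂ)
    (hB : ContDiff ℝ 2 B) (hD : ContDiff ℝ 2 D)
    (eqB : ∀ ν lam : Fin 4, ∀ x,
      (1 / 4 : ℂ) * pd4 ν (pd4 lam B) x
        = ((Z lam * Z ν - Y lam * Y ν : ℝ) : ℂ) * B x
          + ((Y ν * Z lam - Y lam * Z ν : ℝ) : ℂ) * D x)
    (eqD : ∀ ν lam : Fin 4, ∀ x,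
      (1 / 4 : ℂ) * pd4 ν (pd4 lam D) x
        = ((Z lam * Z ν - Y lam * Y ν : ℝ) : ℂ) * D x
          + ((Y ν * Z lam - Y lam * Z ν : ℝ) : ℂ) * B x) :
    (∀ ν lam : Fin 4, Y ν * Z lam = Y lam * Z ν) ∨
    (∀ x, B x = 0 ∧ D x = 0) := by
  refine or_iff_not_imp_left.2 fun h x => ?_
  simp only [not_forall] at h
  obtain ⟨ν, lam, hne⟩ := h
  exact ⟨eq_zero_of_pd4_pd4_eq Y Z hD eqD hne x, eq_zero_of_pd4_pd4_eq Y Z hB eqB hne x⟩
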